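/- Let V ⊆ ℓ² be a pseudo-convex domain with plurisubharmonic exhaustion function η ∈ C^∞_F(V), and let f be a complex-valued function on V which is locally bounded in the sense that sup_E |f| < ∞ for every E ⊂∘ V. Then there exists g ∈ C^∞_F(V) such that |f(z)| ≤ g(z) for all z ∈ V. -/

import Mathlib

/-!
Let `M n` bound `‖f‖` on the sublevel set `{η ≤ n}`, which is uniformly included in `V` since `η`
is an exhaustion function. A locally finite sum of smooth steps gives a smooth `φ : ℝ → ℝ` with
`M ⌈t⌉₊ ≤ φ t`, and `g = φ ∘ η` is the majorant.

By the chain and product rules, the partial derivatives of `φ ∘ η` are polynomials in the partial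
derivatives of `η` with coefficients `φ⁽ᵏ⁾ ∘ η`; this class is closed under differentiation, so
`φ ∘ η` is `C^∞`. On each `E ⊂∘ V` the function `η` and its gradient are bounded, hence so are
`φ ∘ η` and `D(φ ∘ η) = φ'(η) Dη`, which is the `C¹_F` bound.
-/

open MeasureTheory Filter Metric Set
open scoped ENNReal NNReal Topology ComplexOrder

noncomputable section


noncomputable section

abbrev H : Type := lp (fun _ : ℕ => ℂ) 2

/-- The direction vector: `(true, j) ↦ e_j` (the `x_j` direction) and
`(false, j) ↦ √-1 • e_j` (the `y_j` direction). -/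
noncomputable def dir : Bool × ℕ → H :=
  fun d => if d.1 then lp.single 2 d.2 (1 : ℂ) else lp.single 2 d.2 Complex.I

/-- The partial derivative of `f` at `z` in the direction `v` (junk value if it does not exist):
`lim_{ℝ ∋ τ → 0} (f (z + τ • v) - f z)/τ`. -/
noncomputable def pder (v : H) (f : H → ℂ) (z : H) : ℂ :=
  deriv (fun τ : ℝ => f (z + τ • v)) 0

/-- Existence of the partial derivative of `f` at `z` in the direction `v`. -/
def HasPD (v : H) (f : H → ℂ) (z : H) : Prop :=
  DifferentiableAt ℝ (fun τ : ℝ => f (z + τ • v)) 0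

/-- `coordD (true, j) = D_{x_j}`, `coordD (false, j) = D_{y_j}`. -/
noncomputable def coordD (d : Bool × ℕ) (f : H → ℂ) : H → ℂ := pder (dir d) f

/-- Iterated coordinatewise partial derivatives. -/
noncomputable def iterD : List (Bool × ℕ) → (H → ℂ) → H → ℂ
  | [], f => f
  | d :: L, f => coordD d (iterD L f)

/-- `f ∈ C^k(V)` : all partial derivatives of order `< k` exist on `V`, and all iterated
partial derivatives of order `≤ k` are continuous on `V`. -/
def MemCk (V : Set H) (k : ℕ) (f : H → ℂ) : Prop :=
  (∀ L : List (Bool × ℕ), L.length ≤ k → ContinuousOn (iterD L f) V) ∧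
  (∀ L : List (Bool × ℕ), L.length < k → ∀ d : Bool × ℕ, ∀ z ∈ V, HasPD (dir d) (iterD L f) z)

/-- `f ∈ C^∞(V)`. -/
def MemCinf (V : Set H) (f : H → ℂ) : Prop := ∀ k : ℕ, MemCk V k f

/-- `f ∈ C^k_b(V)` : moreover `f` and its partial derivatives up to order `k` are bounded. -/
def MemCkb (V : Set H) (k : ℕ) (f : H → ℂ) : Prop :=
  MemCk V k f ∧ ∀ L : List (Bool × ℕ), L.length ≤ k → ∃ M : ℝ, ∀ z ∈ V, ‖iterD L f z‖ ≤ M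

/-- `S ⊂∘ V` : `S` is uniformly included in `V`. -/
def UnifIncl (S V : Set H) : Prop :=
  ∃ r R : ℝ, 0 < r ∧ 0 < R ∧ (∀ z ∈ S, Metric.ball z r ⊆ V) ∧ S ⊆ Metric.ball 0 R

/-- The support of `f` relative to `V` (the closure, in the subspace topology of `V`,
of `{z ∈ V | f z ≠ 0}`). -/
def suppIn (V : Set H) (f : H → ℂ) : Set H := V ∩ closure {z | z ∈ V ∧ f z ≠ 0}

/-- `f ∈ C^k_0(V)`. -/
def MemCkZero (V : Set H) (k : ℕ) (f : H → ℂ) : Prop :=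
  MemCkb V k f ∧ UnifIncl (suppIn V f) V

/-- `f ∈ C^∞_0(V)`. -/
def MemCinfZero (V : Set H) (f : H → ℂ) : Prop := ∀ k : ℕ, MemCkZero V k f

/-- `∂_j f`. -/
noncomputable def pd (j : ℕ) (f : H → ℂ) (z : H) : ℂ :=
  (coordD (true, j) f z - Complex.I * coordD (false, j) f z) / 2

/-- `∂̄_j f`. -/
noncomputable def dbar (j : ℕ) (f : H → ℂ) (z : H) : ℂ :=
  (coordD (true, j) f z + Complex.I * coordD (false, j) f z) / 2

/-- `δ_j f = ∂_j f - (z̄_j/(2 a_j²)) f`. -/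
noncomputable def deltaOp (a : ℕ → ℝ) (j : ℕ) (f : H → ℂ) (z : H) : ℂ :=
  pd j f z - (starRingEnd ℂ) (z j) / (2 * (a j : ℂ) ^ 2) * f z

/-- The boundedness condition defining `C¹_F(V)`:
`sup_E (|f| + ∑_i (|D_{x_i} f|² + |D_{y_i} f|²)) < ∞` for every `E ⊂∘ V`. -/
def FBound (V : Set H) (f : H → ℂ) : Prop :=
  ∀ E : Set H, UnifIncl E V → ∃ M : ℝ, ∀ z ∈ E,
    ENNReal.ofReal ‖f z‖ +
      ∑' j : ℕ, (ENNReal.ofReal (‖coordD (true, j) f z‖ ^ 2) +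
        ENNReal.ofReal (‖coordD (false, j) f z‖ ^ 2)) ≤ ENNReal.ofReal M

/-- `f ∈ C¹_F(V)`. -/
def MemC1F (V : Set H) (f : H → ℂ) : Prop := MemCk V 1 f ∧ FBound V f

/-- `f ∈ C^∞_{0,F}(V) = C^∞_0(V) ∩ C¹_F(V)`. -/
def MemC0F (V : Set H) (f : H → ℂ) : Prop := MemCinfZero V f ∧ MemC1F V f

/-- Iterated Wirtinger derivatives: `(true, j) ↦ ∂_j`, `(false, j) ↦ ∂̄_j`. -/
noncomputable def wIter : List (Bool × ℕ) → (H → ℂ) → H → ℂ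
  | [], f => f
  | (b, j) :: L, f => if b then pd j (wIter L f) else dbar j (wIter L f)

/-- `f ∈ C^∞_{0,F^∞}(V)` : `f ∈ C^∞_0(V)` and `∂_α ∂̄_β f ∈ C¹_F(V)` for all
finitely supported multi-indices `α`, `β`. -/
def MemC0Finf (V : Set H) (f : H → ℂ) : Prop :=
  MemCinfZero V f ∧
  ∀ Lα Lβ : List ℕ,
    MemC1F V (wIter (Lα.map (fun i => (true, i)) ++ Lβ.map (fun j => (false, j))) f)

/-- A real-valued function regarded as a complex-valued one. -/
def cplx (φ : H → ℝ) : H → ℂ := fun z => (φ z : ℂ)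

/-- The Levi form `∑_{1 ≤ i,j ≤ n} (∂_i ∂̄_j η)(z) ζ_i conj(ζ_j)`. -/
noncomputable def herm (η : H → ℂ) (n : ℕ) (z : H) (ζ : ℕ → ℂ) : ℂ :=
  ∑ i ∈ Finset.range n, ∑ j ∈ Finset.range n,
    pd i (dbar j η) z * ζ i * (starRingEnd ℂ) (ζ j)

/-- Plurisubharmonicity inequality (the order on `ℂ` is the `ComplexOrder`). -/
def PSH (V : Set H) (η : H → ℂ) : Prop :=
  ∀ n : ℕ, ∀ z ∈ V, ∀ ζ : ℕ → ℂ, 0 ≤ herm η n z ζ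

/-- `α` is an exhaustion function of `V`. -/
def Exhausts (V : Set H) (α : H → ℝ) : Prop :=
  ∀ τ : ℝ, UnifIncl {z | z ∈ V ∧ α z ≤ τ} V

/-- `η` is a plurisubharmonic exhaustion function of `V` of class `C^∞_F(V)`. -/
def IsPSHExhaustion (V : Set H) (η : H → ℝ) : Prop :=
  MemCinf V (cplx η) ∧ FBound V (cplx η) ∧ Exhausts V η ∧ PSH V (cplx η)

/-- `V` is a pseudo-convex domain in `ℓ²`. -/
def Pseudoconvex (V : Set H) : Prop :=
  IsOpen V ∧ V.Nonempty ∧ ∃ η : H → ℝ, IsPSHExhaustion V η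

/-- `d(E₁, E₂)`, with value `∞` when either set is empty. -/
noncomputable def setEDist (E₁ E₂ : Set H) : ℝ≥0∞ :=
  ⨅ z₁ ∈ E₁, ⨅ z₂ ∈ E₂, edist z₁ z₂

/-- `d_V(S) = min{d(S, ∂V), 1/sup_{z ∈ S} ‖z‖}` (conventions `1/0 = ∞`, `1/∞ = 0`). -/
noncomputable def dV (V S : Set H) : ℝ≥0∞ :=
  min (setEDist S (frontier V)) (⨆ z ∈ S, (‖z‖₊ : ℝ≥0∞))⁻¹

/-- The Gaussian probability measure `𝒩_σ` on `ℂ`. -/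
noncomputable def gauss (σ : ℝ) : Measure ℂ :=
  volume.withDensity fun z =>
    ENNReal.ofReal ((2 * Real.pi * σ ^ 2)⁻¹ * Real.exp (-(z.re ^ 2 + z.im ^ 2) / (2 * σ ^ 2)))

/-- `P` is the Borel probability measure on `ℓ²` induced by the product of the Gaussian
measures `𝒩_{a_i}`, characterized through its finite-dimensional cylinder marginals. -/
def IsGaussMeasure [MeasurableSpace H] (a : ℕ → ℝ) (P : Measure H) : Prop :=
  IsProbabilityMeasure P ∧
  ∀ (n : ℕ) (E : ℕ → Set ℂ), (∀ i, MeasurableSet (E i)) →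
    P {z : H | ∀ i < n, z i ∈ E i} = ∏ i ∈ Finset.range n, gauss (a i) (E i)

open scoped ContDiff

lemma UnifIncl.subset {E V : Set H} (h : UnifIncl E V) : E ⊆ V := by
  obtain ⟨r, -, hr, -, hball, -⟩ := h
  exact fun z hz => hball z hz (mem_ball_self hr)

section LineDerivatives

variable {V : Set H} {z : H}

lemma eventually_add_smul_mem (hVo : IsOpen V) (hz : z ∈ V) (v : H) :
    ∀ᶠ τ : ℝ in 𝓝 0, z + τ • v ∈ V :=
  (continuous_const.add (continuous_id.smul continuous_const)).continuousAt.preimage_mem_nhds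
    (by simpa using hVo.mem_nhds hz)

lemma eventuallyEq_line_of_eqOn (hVo : IsOpen V) {g₁ g₂ : H → ℂ} (h : EqOn g₁ g₂ V)
    (hz : z ∈ V) (v : H) :
    (fun τ : ℝ => g₁ (z + τ • v)) =ᶠ[𝓝 0] fun τ => g₂ (z + τ • v) :=
  (eventually_add_smul_mem hVo hz v).mono fun _ hτ => h hτ

lemma hasPD_congr (hVo : IsOpen V) {g₁ g₂ : H → ℂ} (h : EqOn g₁ g₂ V) (hz : z ∈ V) (v : H) :
    HasPD v g₁ z ↔ HasPD v g₂ z :=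
  (eventuallyEq_line_of_eqOn hVo h hz v).differentiableAt_iff

lemma pder_congr (hVo : IsOpen V) {g₁ g₂ : H → ℂ} (h : EqOn g₁ g₂ V) (hz : z ∈ V) (v : H) :
    pder v g₁ z = pder v g₂ z :=
  (eventuallyEq_line_of_eqOn hVo h hz v).deriv_eq

variable {η : H → ℝ} {ψ : ℝ → ℝ} {d : Bool × ℕ}

lemma hasDerivAt_line_cplx_comp (hη : HasPD (dir d) (cplx η) z)
    (hψ : DifferentiableAt ℝ ψ (η z)) :
    HasDerivAt (fun τ : ℝ => cplx (ψ ∘ η) (z + τ • dir d))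
      (deriv ψ (η z) * coordD d (cplx η) z) 0 := by
  set u : ℝ → ℝ := fun τ => η (z + τ • dir d)
  have hu : DifferentiableAt ℝ u 0 := by
    simpa [u, cplx, Function.comp_def] using Complex.reCLM.differentiableAt.comp 0 hη
  have hu0 : u 0 = η z := by simp [u]
  have hcoord : coordD d (cplx η) z = deriv u 0 := hu.hasDerivAt.ofReal_comp.deriv
  rw [hcoord]
  rw [← hu0] at hψ ⊢
  have h := (hψ.hasDerivAt.comp 0 hu.hasDerivAt).ofReal_comp
  rw [Complex.ofReal_mul] at h
  exact h

lemma coordD_cplx_comp (hη : HasPD (dir d) (cplx η) z) (hψ : DifferentiableAt ℝ ψ (η z)) :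
    coordD d (cplx (ψ ∘ η)) z = deriv ψ (η z) * coordD d (cplx η) z :=
  (hasDerivAt_line_cplx_comp hη hψ).deriv

end LineDerivatives

/-- The functions that agree on `V` with a polynomial in the iterated partial derivatives of `η`
whose coefficients are smooth functions of `η`. -/
inductive IsDiffPoly (V : Set H) (η : H → ℝ) : (H → ℂ) → Prop
  | base (L : List (Bool × ℕ)) : IsDiffPoly V η (iterD L (cplx η))
  | comp {ψ : ℝ → ℝ} : ContDiff ℝ ∞ ψ → IsDiffPoly V η (cplx (ψ ∘ η))
  | add {g₁ g₂ : H → ℂ} : IsDiffPoly V η g₁ → IsDiffPoly V η g₂ → IsDiffPoly V η (g₁ + g₂)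
  | mul {g₁ g₂ : H → ℂ} : IsDiffPoly V η g₁ → IsDiffPoly V η g₂ → IsDiffPoly V η (g₁ * g₂)
  | congr {g₁ g₂ : H → ℂ} : IsDiffPoly V η g₁ → EqOn g₁ g₂ V → IsDiffPoly V η g₂

namespace IsDiffPoly

variable {V : Set H} {η : H → ℝ} {g : H → ℂ}

lemma continuousOn (hη : MemCinf V (cplx η)) (hg : IsDiffPoly V η g) : ContinuousOn g V := by
  induction hg with
  | base L => exact (hη L.length).1 L le_rfl
  | comp hψ =>
      have hηc : ContinuousOn η V := Complex.continuous_re.comp_continuousOn ((hη 0).1 [] le_rfl)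
      exact Complex.continuous_ofReal.comp_continuousOn (hψ.continuous.comp_continuousOn hηc)
  | add _ _ ih₁ ih₂ => exact ih₁.add ih₂
  | mul _ _ ih₁ ih₂ => exact ih₁.mul ih₂
  | congr _ h ih => exact ih.congr fun z hz => (h hz).symm

lemma hasPD (hVo : IsOpen V) (hη : MemCinf V (cplx η)) (hg : IsDiffPoly V η g) {z : H}
    (hz : z ∈ V) (d : Bool × ℕ) : HasPD (dir d) g z := by
  induction hg with
  | base L => exact (hη (L.length + 1)).2 L (Nat.lt_succ_self _) d z hz
  | comp hψ =>
      exact (hasDerivAt_line_cplx_comp ((hη 1).2 [] one_pos d z hz)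
        (hψ.differentiable (by simp) _)).differentiableAt
  | add _ _ ih₁ ih₂ => exact ih₁.add ih₂
  | mul _ _ ih₁ ih₂ => exact ih₁.mul ih₂
  | congr _ h ih => exact (hasPD_congr hVo h hz _).1 ih

lemma coordD (hVo : IsOpen V) (hη : MemCinf V (cplx η)) (hg : IsDiffPoly V η g)
    (d : Bool × ℕ) : IsDiffPoly V η (coordD d g) := by
  induction hg with
  | base L => exact base (d :: L)
  | @comp ψ hψ =>
      refine congr (mul (comp (contDiff_infty_iff_deriv.1 hψ).2) (base [d])) fun z hz => ?_
      exact (coordD_cplx_comp ((hη 1).2 [] one_pos d z hz) (hψ.differentiable (by simp) _)).symm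
  | add h₁ h₂ ih₁ ih₂ =>
      refine congr (add ih₁ ih₂) fun z hz => ?_
      exact (deriv_fun_add (h₁.hasPD hVo hη hz d) (h₂.hasPD hVo hη hz d)).symm
  | mul h₁ h₂ ih₁ ih₂ =>
      refine congr (add (mul ih₁ h₂) (mul h₁ ih₂)) fun z hz => ?_
      have h := deriv_fun_mul (h₁.hasPD hVo hη hz d) (h₂.hasPD hVo hη hz d)
      simp only [zero_smul, add_zero] at h
      exact h.symm
  | congr _ h ih => exact congr ih fun z hz => pder_congr hVo h hz _

lemma iterD (hVo : IsOpen V) (hη : MemCinf V (cplx η)) (hg : IsDiffPoly V η g)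
    (L : List (Bool × ℕ)) : IsDiffPoly V η (iterD L g) := by
  induction L with
  | nil => exact hg
  | cons d L ih => exact ih.coordD hVo hη d

lemma memCinf (hVo : IsOpen V) (hη : MemCinf V (cplx η)) (hg : IsDiffPoly V η g) :
    MemCinf V g := fun _ =>
  ⟨fun L _ => (hg.iterD hVo hη L).continuousOn hη,
    fun L _ d _ hz => (hg.iterD hVo hη L).hasPD hVo hη hz d⟩

end IsDiffPoly

def sqGradNorm (f : H → ℂ) (z : H) : ℝ≥0∞ :=
  ∑' j : ℕ, (ENNReal.ofReal (‖coordD (true, j) f z‖ ^ 2) +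
    ENNReal.ofReal (‖coordD (false, j) f z‖ ^ 2))

section FBound

variable {V : Set H} {η : H → ℝ} {ψ : ℝ → ℝ}

lemma sqGradNorm_cplx_comp {z : H} (hη : ∀ d, HasPD (dir d) (cplx η) z)
    (hψ : DifferentiableAt ℝ ψ (η z)) :
    sqGradNorm (cplx (ψ ∘ η)) z = ENNReal.ofReal (deriv ψ (η z) ^ 2) * sqGradNorm (cplx η) z := by
  have hterm : ∀ d, ENNReal.ofReal (‖coordD d (cplx (ψ ∘ η)) z‖ ^ 2) =
      ENNReal.ofReal (deriv ψ (η z) ^ 2) * ENNReal.ofReal (‖coordD d (cplx η) z‖ ^ 2) := by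
    intro d
    rw [coordD_cplx_comp (hη d) hψ, norm_mul, Complex.norm_real, mul_pow, Real.norm_eq_abs,
      sq_abs, ENNReal.ofReal_mul (sq_nonneg _)]
  simp only [sqGradNorm, hterm, ← mul_add, ENNReal.tsum_mul_left]

lemma FBound.exists_bound {E : Set H} (hF : FBound V (cplx η)) (hE : UnifIncl E V) :
    ∃ K, ∀ z ∈ E, |η z| ≤ K ∧ sqGradNorm (cplx η) z ≤ ENNReal.ofReal K := by
  obtain ⟨M, hM⟩ := hF E hE
  refine ⟨max M 0, fun z hz => ⟨?_, ?_⟩⟩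
  · have h := ENNReal.toReal_mono ENNReal.ofReal_ne_top (le_self_add.trans (hM z hz))
    simpa [cplx, ENNReal.toReal_ofReal'] using h
  · exact le_add_self.trans ((hM z hz).trans (ENNReal.ofReal_le_ofReal (le_max_left _ _)))

lemma FBound.cplx_comp (hη : MemCk V 1 (cplx η)) (hF : FBound V (cplx η))
    (hψ : ContDiff ℝ 1 ψ) : FBound V (cplx (ψ ∘ η)) := by
  intro E hE
  obtain ⟨K, hK⟩ := hF.exists_bound hE
  obtain ⟨C₀, hC₀⟩ := (isCompact_Icc (a := -K) (b := K)).exists_bound_of_continuousOn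
    hψ.continuous.continuousOn
  obtain ⟨C₁, hC₁⟩ := (isCompact_Icc (a := -K) (b := K)).exists_bound_of_continuousOn
    (hψ.continuous_deriv le_rfl).continuousOn
  refine ⟨C₀ + C₁ ^ 2 * K, fun z hz => ?_⟩
  obtain ⟨hηz, hgrad⟩ := hK z hz
  have hmem : η z ∈ Icc (-K) K := abs_le.1 hηz
  have hψz : ‖cplx (ψ ∘ η) z‖ ≤ C₀ := by simpa [cplx] using hC₀ _ hmem
  have hψ'z : deriv ψ (η z) ^ 2 ≤ C₁ ^ 2 := by
    simpa using pow_le_pow_left₀ (norm_nonneg _) (hC₁ _ hmem) 2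
  have hC₀_nonneg : 0 ≤ C₀ := (norm_nonneg _).trans hψz
  have hK_nonneg : 0 ≤ K := (abs_nonneg _).trans hηz
  change _ + sqGradNorm _ z ≤ _
  rw [sqGradNorm_cplx_comp (fun d => hη.2 [] one_pos d z (hE.subset hz))
    (hψ.differentiable one_ne_zero _)]
  calc ENNReal.ofReal ‖cplx (ψ ∘ η) z‖ +
        ENNReal.ofReal (deriv ψ (η z) ^ 2) * sqGradNorm (cplx η) z
      ≤ ENNReal.ofReal C₀ + ENNReal.ofReal (C₁ ^ 2) * ENNReal.ofReal K := by
        gcongr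
    _ = ENNReal.ofReal (C₀ + C₁ ^ 2 * K) := by
        rw [← ENNReal.ofReal_mul (sq_nonneg _), ← ENNReal.ofReal_add hC₀_nonneg (by positivity)]

end FBound

section Majorant

open Real

lemma mul_smoothTransition_sub_natCast_eq_zero (b : ℕ → ℝ) {t : ℝ} {n N : ℕ} (ht : t ≤ N)
    (hn : n ∉ Finset.range N) : b n * smoothTransition (t - n) = 0 := by
  have hNn : (N : ℝ) ≤ n := Nat.cast_le.2 (not_lt.1 (Finset.mem_range.not.1 hn))
  rw [smoothTransition.zero_of_nonpos (by linarith), mul_zero]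

lemma tsum_mul_smoothTransition_eq_sum (b : ℕ → ℝ) {t : ℝ} {N : ℕ} (ht : t ≤ N) :
    ∑' n : ℕ, b n * smoothTransition (t - n) =
      ∑ n ∈ Finset.range N, b n * smoothTransition (t - n) :=
  tsum_eq_sum fun _ hn => mul_smoothTransition_sub_natCast_eq_zero b ht hn

lemma contDiff_tsum_mul_smoothTransition (b : ℕ → ℝ) :
    ContDiff ℝ ∞ fun t => ∑' n : ℕ, b n * smoothTransition (t - n) := by
  refine contDiff_iff_contDiffAt.2 fun t₀ => ?_
  have hsum : ContDiff ℝ ∞ fun t =>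
      ∑ n ∈ Finset.range (⌈t₀⌉₊ + 1), b n * smoothTransition (t - n) :=
    ContDiff.sum fun n _ =>
      contDiff_const.mul (smoothTransition.contDiff.comp (contDiff_id.sub contDiff_const))
  refine hsum.contDiffAt.congr_of_eventuallyEq ?_
  have ht₀ : t₀ < (⌈t₀⌉₊ + 1 : ℕ) := by push_cast; linarith [Nat.le_ceil t₀]
  filter_upwards [Iio_mem_nhds ht₀] with t ht
  exact tsum_mul_smoothTransition_eq_sum b (le_of_lt ht)

lemma exists_contDiff_ge_ceil (b : ℕ → ℝ) :
    ∃ φ : ℝ → ℝ, ContDiff ℝ ∞ φ ∧ ∀ t, b ⌈t⌉₊ ≤ φ t := by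
  set c : ℕ → ℝ := fun n => max (b n) 0
  refine ⟨fun t => c 0 + ∑' n : ℕ, c n * smoothTransition (t + 2 - n),
    contDiff_const.add
      ((contDiff_tsum_mul_smoothTransition c).comp (contDiff_id.add contDiff_const)),
    fun t => ?_⟩
  have hnonneg : ∀ n, 0 ≤ c n * smoothTransition (t + 2 - n) :=
    fun n => mul_nonneg (le_max_right _ _) (smoothTransition.nonneg _)
  have hsummable : Summable fun n : ℕ => c n * smoothTransition (t + 2 - n) :=
    summable_of_ne_finset_zero fun _ hn =>
      mul_smoothTransition_sub_natCast_eq_zero c (Nat.le_ceil _) hn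
  -- For `t > -1` the summand of index `⌈t⌉₊` is `c ⌈t⌉₊`; the constant term covers `t ≤ 0`.
  rcases Nat.eq_zero_or_pos ⌈t⌉₊ with h0 | hpos
  · rw [h0]
    exact (le_max_left _ _).trans (le_add_of_nonneg_right (tsum_nonneg hnonneg))
  · have hone : smoothTransition (t + 2 - ⌈t⌉₊) = 1 :=
      smoothTransition.one_of_one_le (by linarith [Nat.ceil_lt_add_one (Nat.ceil_pos.1 hpos).le])
    calc b ⌈t⌉₊ ≤ c ⌈t⌉₊ * smoothTransition (t + 2 - ⌈t⌉₊) := by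
          rw [hone, mul_one]
          exact le_max_left _ _
      _ ≤ ∑' n : ℕ, c n * smoothTransition (t + 2 - n) := hsummable.le_tsum _ fun n _ => hnonneg n
      _ ≤ _ := le_add_of_nonneg_left (le_max_right _ _)

end Majorant

theorem exists_smooth_majorant_general
    (V : Set H) (hVo : IsOpen V)
    (η : H → ℝ) (hη : IsPSHExhaustion V η)
    (f : H → ℂ) (hf : ∀ E : Set H, UnifIncl E V → ∃ M : ℝ, ∀ z ∈ E, ‖f z‖ ≤ M) :
    ∃ g : H → ℝ, MemCinf V (cplx g) ∧ FBound V (cplx g) ∧ ∀ z ∈ V, ‖f z‖ ≤ g z := by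
  obtain ⟨hηsmooth, hηF, hηexh, -⟩ := hη
  choose M hM using fun n : ℕ => hf _ (hηexh n)
  obtain ⟨φ, hφ, hMφ⟩ := exists_contDiff_ge_ceil M
  refine ⟨φ ∘ η, (IsDiffPoly.comp hφ).memCinf hVo hηsmooth,
    hηF.cplx_comp (hηsmooth 1) (hφ.of_le (by simp)), fun z hz => ?_⟩
  exact (hM _ z ⟨hz, Nat.le_ceil _⟩).trans (hMφ _)

/-- On a pseudo-convex domain `V`, every locally bounded function `f`
(bounded on each `E ⊂∘ V`) is dominated by some real-valued `g ∈ C^∞_F(V)`. -/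
theorem exists_smooth_majorant
    (V : Set H) (hVo : IsOpen V) (hVne : V.Nonempty)
    (η : H → ℝ) (hη : IsPSHExhaustion V η)
    (f : H → ℂ) (hf : ∀ E : Set H, UnifIncl E V → ∃ M : ℝ, ∀ z ∈ E, ‖f z‖ ≤ M) :
    ∃ g : H → ℝ, MemCinf V (cplx g) ∧ FBound V (cplx g) ∧ ∀ z ∈ V, ‖f z‖ ≤ g z :=
  exists_smooth_majorant_general V hVo η hη f hf
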